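/- Let C be a cycle with an assignment of a direction to each edge in a subset E* ⊆ E(C), and suppose each directed edge goes from a vertex of V₁ to a vertex of V₂ for disjoint vertex sets V₁,V₂. If |E(C) ∩ E*| is even and no component of C − (E* ∩ E(C)) is a path from a vertex of V₁ to a vertex of V₂, then the directed edges of E* are balanced on C, i.e., exactly half of the edges of E(C) ∩ E* are oriented clockwise along C. -/

import Mathlib

open SimpleGraph

attribute [local instance] Classical.propDecidable

universe u
variable {V : Type u}

/-- `H` (on vertex set `V × Fin m`) is an `m`-fold cover of `G`. -/
def IsCover (G : SimpleGraph V) (m : ℕ) (H : SimpleGraph (V × Fin m)) : Prop :=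
  (∀ (u : V) (i j : Fin m), i ≠ j → H.Adj (u, i) (u, j)) ∧
  (∀ (u v : V) (i j : Fin m), u ≠ v → H.Adj (u, i) (v, j) → G.Adj u v) ∧
  (∀ (u v : V) (i j j' : Fin m), u ≠ v → H.Adj (u, i) (v, j) → H.Adj (u, i) (v, j') → j = j')

/-- A full cover: every matching between fibers over an edge is perfect. -/
def IsFullCover (G : SimpleGraph V) (m : ℕ) (H : SimpleGraph (V × Fin m)) : Prop :=
  IsCover G m H ∧ ∀ u v : V, G.Adj u v → ∀ i : Fin m, ∃ j : Fin m, H.Adj (u, i) (v, j)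

/-- Number of ℋ-colorings (independent transversals) of a cover graph `H`. -/
noncomputable def coverCount {m : ℕ} (H : SimpleGraph (V × Fin m)) : ℕ :=
  Nat.card {f : V → Fin m // ∀ u v : V, ¬ H.Adj (u, f u) (v, f v)}

/-- The DP color function. -/
noncomputable def PDP (G : SimpleGraph V) (m : ℕ) : ℕ :=
  sInf {n | ∃ H : SimpleGraph (V × Fin m), IsCover G m H ∧ n = coverCount H}

/-- Number of proper m-colorings, i.e. the chromatic polynomial evaluated at m. -/
noncomputable def properCount (G : SimpleGraph V) (m : ℕ) : ℕ :=
  Nat.card {f : V → Fin m // ∀ u v : V, G.Adj u v → f u ≠ f v}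

/-- Girth of an edge: length of a shortest cycle through `e` (∞ if none). -/
noncomputable def edgeGirth (G : SimpleGraph V) (e : Sym2 V) : ℕ∞ :=
  ⨅ (a : V) (p : G.Walk a a) (_ : p.IsCycle) (_ : e ∈ p.edges), (p.length : ℕ∞)

/-- Girth of an edge set `E₀`: length of a shortest cycle meeting `E₀` in an odd
number of edges (∞ if none). -/
noncomputable def setGirth (G : SimpleGraph V) (E₀ : Set (Sym2 V)) : ℕ∞ :=
  ⨅ (a : V) (p : G.Walk a a) (_ : p.IsCycle)
    (_ : Odd (p.edges.countP (fun e => e ∈ E₀))), (p.length : ℕ∞)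

/-- The canonical cover graph `H_{G,m}`. -/
def canonicalCover (G : SimpleGraph V) (m : ℕ) : SimpleGraph (V × Fin m) where
  Adj x y := (x.1 = y.1 ∧ x.2 ≠ y.2) ∨ (G.Adj x.1 y.1 ∧ x.2 = y.2)
  symm := by
    constructor
    rintro ⟨u, i⟩ ⟨v, j⟩ (⟨h1, h2⟩ | ⟨h1, h2⟩)
    · exact Or.inl ⟨h1.symm, h2.symm⟩
    · exact Or.inr ⟨h1.symm, h2.symm⟩
  loopless := by constructor; rintro ⟨u, i⟩ (⟨h1, h2⟩ | ⟨h1, h2⟩) <;> simp_all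

/-- `D` is an orientation of the edge set `E₀`. -/
def IsOrientation (D : Set (V × V)) (E₀ : Set (Sym2 V)) : Prop :=
  (∀ x ∈ D, s(x.1, x.2) ∈ E₀) ∧
  ∀ u v : V, s(u, v) ∈ E₀ → ((u, v) ∈ D ↔ (v, u) ∉ D)

/-- The directed edges `D` are balanced on the closed walk `p`. -/
noncomputable def BalancedOn {G : SimpleGraph V} (D : Set (V × V)) {a : V}
    (p : G.Walk a a) : Prop :=
  p.darts.countP (fun d => (d.fst, d.snd) ∈ D) =
    p.darts.countP (fun d => (d.snd, d.fst) ∈ D)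

/-- A DP-good graph. -/
def DPGood [Fintype V] (G : SimpleGraph V) : Prop :=
  G.Connected ∧
  ∃ T : SimpleGraph V, T ≤ G ∧ T.IsTree ∧
    ∃ (q : ℕ) (e : Fin q → Sym2 V),
      Function.Injective e ∧
      Set.range e = G.edgeSet \ T.edgeSet ∧
      (∀ i j : Fin q, i ≤ j → edgeGirth G (e i) ≤ edgeGirth G (e j)) ∧
      ∀ i : Fin q, ∃ g : ℕ, Odd g ∧ edgeGirth G (e i) = (g : ℕ∞) ∧
        ∃ (a : V) (C : G.Walk a a), C.IsCycle ∧ e i ∈ C.edges ∧ C.length = g ∧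
          ∀ f ∈ C.edges, f ∈ T.edgeSet ∪ {e j | j ≤ i}


/-! Let `A` be the set of vertices joined inside `C - E*` to a `V₂`-end of an edge of `E*`.
No such component contains a `V₁`-end, so every edge of `E*` on `C` points from outside `A`
into `A`, while the edges of `C - E*` never cross the boundary of `A`. Hence the edges of `E*`
traversed forwards are exactly the places where `C` enters `A`, those traversed backwards are
where it leaves `A`, and a closed walk enters `A` as often as it leaves it. -/

theorem List.countP_not_and_add_countP {α : Type*} (l : List α) (f g : α → Bool) :
    l.countP (fun x => !f x && g x) + l.countP f =
      l.countP (fun x => f x && !g x) + l.countP g := by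
  induction l with
  | nil => rfl
  | cons x l ih =>
    simp only [List.countP_cons]
    cases f x <;> cases g x <;> simp <;> omega

namespace SimpleGraph.Walk

variable {G : SimpleGraph V}

theorem map_fst_darts_perm_map_snd_darts {a : V} (p : G.Walk a a) :
    (p.darts.map (·.fst)).Perm (p.darts.map (·.snd)) := by
  refine List.Perm.cons_inv (a := a) ?_
  rw [cons_map_snd_darts, ← map_fst_darts_append]
  exact (List.perm_append_singleton a _).symm

theorem countP_darts_enter_eq_countP_darts_leave {a : V} (p : G.Walk a a) (A : Set V) :
    p.darts.countP (fun d => decide (d.fst ∉ A ∧ d.snd ∈ A)) =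
      p.darts.countP (fun d => decide (d.fst ∈ A ∧ d.snd ∉ A)) := by
  have hperm := (map_fst_darts_perm_map_snd_darts p).countP_eq (fun v => decide (v ∈ A))
  simp only [List.countP_map, Function.comp_def] at hperm
  have := p.darts.countP_not_and_add_countP (fun d => d.fst ∈ A) (fun d => d.snd ∈ A)
  simp only [Bool.decide_and, decide_not]
  omega

end SimpleGraph.Walk

variable {V₁ V₂ : Set V} {E Estar : Set (Sym2 V)} {A : Set V}

structure IsSeparating (V₁ V₂ : Set V) (E Estar : Set (Sym2 V)) (A : Set V) : Prop where
  not_mem_of_mem_left : ∀ v ∈ V₁, (∃ e ∈ E, e ∈ Estar ∧ v ∈ e) → v ∉ A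
  mem_of_mem_right : ∀ v ∈ V₂, (∃ e ∈ E, e ∈ Estar ∧ v ∈ e) → v ∈ A
  mem_iff_mem : ∀ u v, s(u, v) ∈ E \ Estar → (u ∈ A ↔ v ∈ A)

theorem IsSeparating.mem_orientation_iff {D : Set (V × V)} (hA : IsSeparating V₁ V₂ E Estar A)
    (hD : IsOrientation D Estar) (hDdir : ∀ x ∈ D, x.1 ∈ V₁ ∧ x.2 ∈ V₂) {u v : V}
    (huv : s(u, v) ∈ E) : (u, v) ∈ D ↔ u ∉ A ∧ v ∈ A := by
  constructor
  · intro h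
    have hEstar := hD.1 _ h
    exact ⟨hA.not_mem_of_mem_left u (hDdir _ h).1 ⟨_, huv, hEstar, Sym2.mem_mk_left u v⟩,
      hA.mem_of_mem_right v (hDdir _ h).2 ⟨_, huv, hEstar, Sym2.mem_mk_right u v⟩⟩
  · rintro ⟨hu, hv⟩
    have hEstar : s(u, v) ∈ Estar := by
      by_contra hE
      exact hu ((hA.mem_iff_mem u v ⟨huv, hE⟩).mpr hv)
    by_contra h
    have hvu : (v, u) ∈ D := not_not.mp (mt (hD.2 u v hEstar).mpr h)
    rw [Sym2.eq_swap] at huv hEstar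
    exact hA.not_mem_of_mem_left v (hDdir _ hvu).1 ⟨_, huv, hEstar, Sym2.mem_mk_left v u⟩ hv

theorem exists_isSeparating {G : SimpleGraph V} (hE : E ⊆ G.edgeSet)
    (hnopath : ¬ ∃ v₁ v₂ : V, v₁ ∈ V₁ ∧ v₂ ∈ V₂ ∧ ∃ q : G.Walk v₁ v₂, q.IsPath ∧
      (∀ e ∈ q.edges, e ∈ E ∧ e ∉ Estar) ∧
      (∃ e₁ ∈ E, e₁ ∈ Estar ∧ v₁ ∈ e₁) ∧
      (∃ e₂ ∈ E, e₂ ∈ Estar ∧ v₂ ∈ e₂)) :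
    ∃ A, IsSeparating V₁ V₂ E Estar A := by
  set H := fromEdgeSet (E \ Estar)
  have hHG : H ≤ G := (fromEdgeSet_le G).mpr fun e he => hE he.1.1
  refine ⟨{v | ∃ w ∈ V₂, (∃ e ∈ E, e ∈ Estar ∧ w ∈ e) ∧ H.Reachable v w}, ?_, ?_, ?_⟩
  · rintro v hv hvE ⟨w, hw, hwE, ⟨r⟩⟩
    refine hnopath ⟨v, w, hv, hw, r.toPath.1.mapLe hHG, r.toPath.2.mapLe hHG, ?_, hvE, hwE⟩
    intro e he
    rw [Walk.edges_mapLe_eq_edges] at he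
    have he' := r.toPath.1.edges_subset_edgeSet he
    rw [edgeSet_fromEdgeSet] at he'
    exact he'.1
  · exact fun v hv hvE => ⟨v, hv, hvE, Reachable.refl v⟩
  · intro u v huv
    rcases eq_or_ne u v with rfl | hne
    · rfl
    have hadj : H.Adj u v := (fromEdgeSet_adj _).mpr ⟨huv, hne⟩
    exact ⟨fun ⟨w, hw, hwE, hr⟩ => ⟨w, hw, hwE, hadj.symm.reachable.trans hr⟩,
      fun ⟨w, hw, hwE, hr⟩ => ⟨w, hw, hwE, hadj.reachable.trans hr⟩⟩

theorem balanced_of_no_component_path_general {V : Type}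
    (G : SimpleGraph V) (V₁ V₂ : Set V)
    (Estar : Set (Sym2 V)) (D : Set (V × V)) (hD : IsOrientation D Estar)
    (hDdir : ∀ x ∈ D, x.1 ∈ V₁ ∧ x.2 ∈ V₂)
    (a : V) (p : G.Walk a a)
    (hnopath : ¬ ∃ v₁ v₂ : V, v₁ ∈ V₁ ∧ v₂ ∈ V₂ ∧ ∃ q : G.Walk v₁ v₂, q.IsPath ∧
      (∀ e ∈ q.edges, e ∈ p.edges ∧ e ∉ Estar) ∧
      (∃ e₁ ∈ p.edges, e₁ ∈ Estar ∧ v₁ ∈ e₁) ∧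
      (∃ e₂ ∈ p.edges, e₂ ∈ Estar ∧ v₂ ∈ e₂)) :
    BalancedOn D p := by
  obtain ⟨A, hA⟩ :=
    exists_isSeparating (E := {e | e ∈ p.edges}) (fun _ he => p.edges_subset_edgeSet he) hnopath
  have hfwd : ∀ d ∈ p.darts, (d.fst, d.snd) ∈ D ↔ d.fst ∉ A ∧ d.snd ∈ A := fun d hd =>
    hA.mem_orientation_iff hD hDdir (p.darts.mem_map_of_mem (f := Dart.edge) hd)
  have hbwd : ∀ d ∈ p.darts, (d.snd, d.fst) ∈ D ↔ d.fst ∈ A ∧ d.snd ∉ A := fun d hd => by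
    have hedge : s(d.snd, d.fst) ∈ p.edges :=
      Sym2.eq_swap ▸ p.darts.mem_map_of_mem (f := Dart.edge) hd
    rw [hA.mem_orientation_iff hD hDdir hedge, and_comm]
  calc p.darts.countP (fun d => decide ((d.fst, d.snd) ∈ D))
      = p.darts.countP (fun d => decide (d.fst ∉ A ∧ d.snd ∈ A)) :=
        List.countP_congr (by simpa using hfwd)
    _ = p.darts.countP (fun d => decide (d.fst ∈ A ∧ d.snd ∉ A)) :=
        p.countP_darts_enter_eq_countP_darts_leave A
    _ = p.darts.countP (fun d => decide ((d.snd, d.fst) ∈ D)) :=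
        (List.countP_congr (by simpa using hbwd)).symm

/-- directed edges from `V₁` to `V₂` on a cycle are balanced when their
number is even and no component of the cycle minus `E*` is a `V₁`–`V₂` path. -/
theorem balanced_of_no_component_path {V : Type} [DecidableEq V]
    (G : SimpleGraph V) (V₁ V₂ : Set V) (hdisj : Disjoint V₁ V₂)
    (Estar : Set (Sym2 V)) (D : Set (V × V)) (hD : IsOrientation D Estar)
    (hDdir : ∀ x ∈ D, x.1 ∈ V₁ ∧ x.2 ∈ V₂)
    (a : V) (p : G.Walk a a) (hp : p.IsCycle)
    (hEsub : ∀ e ∈ Estar, e ∈ p.edges)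
    (heven : Even (p.edges.countP (fun e => e ∈ Estar)))
    (hnopath : ¬ ∃ v₁ v₂ : V, v₁ ∈ V₁ ∧ v₂ ∈ V₂ ∧ ∃ q : G.Walk v₁ v₂, q.IsPath ∧
      (∀ e ∈ q.edges, e ∈ p.edges ∧ e ∉ Estar) ∧
      (∃ e₁ ∈ p.edges, e₁ ∈ Estar ∧ v₁ ∈ e₁) ∧
      (∃ e₂ ∈ p.edges, e₂ ∈ Estar ∧ v₂ ∈ e₂)) :
    BalancedOn D p :=
  balanced_of_no_component_path_general G V₁ V₂ Estar D hD hDdir a p hnopath
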